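/- arXiv:2212.03713 — 6 statements merged into one kernel-verified Lean document; each statement's English description precedes it below -/
import Mathlib

section
/- Let G be a finite group and S/R a G-Galois extension of commutative rings. Then S is projective as a module over the group ring R[G]. -/
open scoped TensorProduct

/-- The canonical map `S ⊗[R] S → ∏_{g ∈ G} S`, `s ⊗ t ↦ (s · g(t))_g`, whose
bijectivity (together with finiteness and projectivity of `S` over `R`) defines a
`G`-Galois extension of commutative rings. -/
noncomputable def galMap (R S G : Type*) [CommRing R] [CommRing S] [Algebra R S]
    [Group G] (act : G →* (S ≃ₐ[R] S)) : S ⊗[R] S →ₗ[R] (G → S) :=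
  TensorProduct.lift
    (LinearMap.mk₂ R (fun s t g => s * act g t)
      (fun s s' t => by funext g; simp [add_mul])
      (fun c s t => by funext g; simp [smul_mul_assoc])
      (fun s t t' => by funext g; simp [mul_add])
      (fun c s t => by funext g; simp [mul_smul_comm]))

/-- A `G`-Galois extension `S/R` is a `G`-Galois extension of commutative rings. -/
def IsGaloisExt (R S G : Type*) [CommRing R] [CommRing S] [Algebra R S]
    [Group G] (act : G →* (S ≃ₐ[R] S)) : Prop :=
  Module.Finite R S ∧ Module.Projective R S ∧ Function.Bijective (galMap R S G act)

/-- The representation of `G` on `S` coming from a Galois action, making `S` a module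
over the group ring `R[G]`. -/
noncomputable def galRep (R S G : Type*) [CommRing R] [CommRing S] [Algebra R S]
    [Group G] (act : G →* (S ≃ₐ[R] S)) : Representation R G S where
  toFun g := (act g).toLinearMap
  map_one' := by ext s; simp
  map_mul' g g' := by ext s; simp

section GalAux

variable {R S G : Type*} [CommRing R] [CommRing S] [Algebra R S]
    [Group G] (act : G →* (S ≃ₐ[R] S))

lemma galAux_mul_apply (g h : G) (s : S) : act g (act h s) = act (g * h) s := by
  rw [map_mul]; rfl

lemma galAux_tr_fix [Fintype G] (h : G) (s : S) :
    act h (∑ g : G, act g s) = ∑ g : G, act g s := by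
  rw [map_sum]
  exact Fintype.sum_equiv (Equiv.mulLeft h) _ _
    (fun g => galAux_mul_apply act h g s)

/-- A Galois extension has an element of trace one. -/
lemma galAux_exists_trace_one [Fintype G] (hgal : IsGaloisExt R S G act) :
    ∃ c : S, ∑ g : G, act g c = 1 := by
  classical
  obtain ⟨hfin, hproj, hbij⟩ := hgal
  haveI : Module.Finite R S := hfin
  -- a "separability"-type element
  obtain ⟨z, hz⟩ := hbij.2 (Pi.single (1 : G) (1 : S))
  obtain ⟨T, hT⟩ := TensorProduct.exists_finset z
  have hkey : ∀ g : G, (∑ p ∈ T, p.1 * act g p.2) = if g = 1 then (1 : S) else 0 := by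
    intro g
    have := congrFun hz g
    rw [hT, map_sum] at this
    simpa [galMap, Finset.sum_apply, Pi.single_apply] using this
  have hone : (∑ p ∈ T, p.1 * ∑ g : G, act g p.2) = 1 := by
    have : (∑ g : G, ∑ p ∈ T, p.1 * act g p.2) = 1 := by
      simp [hkey]
    rw [← this, Finset.sum_comm]
    simp [Finset.mul_sum]
  -- the fixed subalgebra
  let A₀ : Subalgebra R S :=
  { carrier := {s | ∀ g : G, act g s = s}
    mul_mem' := fun {a b} ha hb g => by rw [map_mul, ha g, hb g]
    one_mem' := fun g => map_one _
    add_mem' := fun {a b} ha hb g => by rw [map_add, ha g, hb g]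
    zero_mem' := fun g => map_zero _
    algebraMap_mem' := fun r g => (act g).commutes r }
  haveI : Module.Finite ↥A₀ S := Module.Finite.of_restrictScalars_finite R ↥A₀ S
  have hA₀smul : ∀ (a : ↥A₀) (s : S), a • s = ↑a * s := fun _ _ => rfl
  -- trace as an `A₀`-linear map into `A₀`
  let trL : S →ₗ[↥A₀] ↥A₀ :=
  { toFun := fun s => ⟨∑ g : G, act g s, fun h => galAux_tr_fix act h s⟩
    map_add' := fun s t => by
      ext
      simp [Finset.sum_add_distrib]
    map_smul' := fun a s => by
      ext
      have : ∀ g : G, act g (↑a * s) = ↑a * act g s := fun g => by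
        rw [map_mul, a.2 g]
      simp only [hA₀smul, RingHom.id_apply]
      simp [this, Finset.mul_sum, Submonoid.coe_mul] }
  have htrL : ∀ s : S, (trL s : S) = ∑ g : G, act g s := fun s => rfl
  have hle : (⊤ : Submodule ↥A₀ S) ≤ (LinearMap.range trL : Ideal ↥A₀) • ⊤ := by
    intro s _
    have hs : ∑ p ∈ T, trL p.2 • (p.1 * s) = s := by
      have heach : ∀ p : S × S, trL p.2 • (p.1 * s) = (p.1 * ∑ g : G, act g p.2) * s :=
        fun p => by rw [hA₀smul, htrL]; ring
      rw [Finset.sum_congr rfl (fun p _ => heach p), ← Finset.sum_mul, hone, one_mul]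
    rw [← hs]
    exact Submodule.sum_mem _ fun p _ =>
      Submodule.smul_mem_smul (LinearMap.mem_range_self trL p.2) trivial
  obtain ⟨r, hrJ, hr⟩ :=
    Submodule.exists_mem_and_smul_eq_self_of_fg_of_le_smul
      (LinearMap.range trL : Ideal ↥A₀) (⊤ : Submodule ↥A₀ S)
      Module.Finite.fg_top hle
  obtain ⟨c, hc⟩ := hrJ
  refine ⟨c, ?_⟩
  have h1 : r • (1 : S) = 1 := hr 1 trivial
  rw [hA₀smul, mul_one] at h1
  rw [← htrL c, hc, h1]

end GalAux

theorem stmt4 (R S G : Type*) [CommRing R] [CommRing S] [Algebra R S]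
    [Group G] [Finite G] (act : G →* (S ≃ₐ[R] S))
    (hgal : IsGaloisExt R S G act) :
    Module.Projective (MonoidAlgebra R G) (galRep R S G act).asModule := by
  classical
  cases nonempty_fintype G
  obtain ⟨hfin, hproj, hbij⟩ := hgal
  haveI : Module.Projective R S := hproj
  obtain ⟨c, hc⟩ := galAux_exists_trace_one act ⟨hfin, hproj, hbij⟩
  set A := MonoidAlgebra R G with hA
  set ρ := galRep R S G act with hρ
  -- bridge lemmas for the module structure on `P := ρ.asModule`
  have hsmulP : ∀ (a : A) (x : ρ.asModule), a • x = ρ.asAlgebraHom a x := fun a x => rfl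
  have hρg : ∀ (g : G) (x : S), ρ g x = act g x := fun _ _ => rfl
  have hsingleP : ∀ (g : G) (r : R) (x : ρ.asModule),
      (MonoidAlgebra.single g r : A) • x = r • act g x := by
    intro g r x
    rw [hsmulP, Representation.asAlgebraHom_single]
    rfl
  haveI : Module.Projective A (A ⊗[R] S) := inferInstance
  -- the equivariant section `i : S → A ⊗[R] S`
  let iF : S → A ⊗[R] S := fun t => ∑ g : G, MonoidAlgebra.single g (1 : R) ⊗ₜ[R] (act g⁻¹ t)
  have iFadd : ∀ t t' : S, iF (t + t') = iF t + iF t' := by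
    intro t t'
    simp [iF, map_add, TensorProduct.tmul_add, Finset.sum_add_distrib]
  have iFsmulR : ∀ (r : R) (t : S), iF (r • t) = r • iF t := by
    intro r t
    simp [iF, map_smul, TensorProduct.tmul_smul, Finset.smul_sum]
  have iFof : ∀ (g : G) (t : S), iF (act g t) = (MonoidAlgebra.single g (1 : R) : A) • iF t := by
    intro g t
    rw [show ((MonoidAlgebra.single g (1 : R) : A) • iF t) =
      ∑ h : G, (MonoidAlgebra.single g (1 : R) : A) •
        (MonoidAlgebra.single h (1 : R) ⊗ₜ[R] (act h⁻¹ t)) from Finset.smul_sum]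
    refine Fintype.sum_equiv (Equiv.mulLeft g⁻¹) _ _ fun x => ?_
    rw [TensorProduct.smul_tmul', smul_eq_mul, MonoidAlgebra.single_mul_single]
    simp [galAux_mul_apply, mul_inv_rev, mul_assoc]
  let iMap : ρ.asModule →ₗ[A] (A ⊗[R] S) :=
  { toFun := iF
    map_add' := iFadd
    map_smul' := by
      intro a t
      simp only [RingHom.id_apply]
      induction a using MonoidAlgebra.induction_linear with
      | zero => rw [zero_smul, zero_smul]; show iF (0 : S) = 0; simp [iF]
      | add f f' hf hf' => rw [add_smul]; exact (iFadd (f • t) (f' • t)).trans (by rw [hf, hf', add_smul])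
      | single g r =>
        rw [hsingleP, iFsmulR]; refine (congrArg (r • ·) (iFof g t)).trans ?_
        rw [← smul_assoc, MonoidAlgebra.smul_single', mul_one] }
  -- the equivariant retraction `A ⊗[R] S → S`
  let sR : A ⊗[R] S →ₗ[R] S := TensorProduct.lift
    (LinearMap.mk₂ R (fun a u => ∑ g : G, a.coeff g • act g (c * u))
      (fun a a' u => by
        rw [← Finset.sum_add_distrib]
        exact Finset.sum_congr rfl fun x _ => by
          show (a.coeff x + a'.coeff x) • ((act x) (c * u)) = _
          rw [add_smul])
      (fun r a u => by
        rw [Finset.smul_sum]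
        exact Finset.sum_congr rfl fun x _ => by
          show (r • a.coeff x) • ((act x) (c * u)) = _
          rw [smul_assoc])
      (fun a u u' => by simp [mul_add, map_add, smul_add, Finset.sum_add_distrib]
      )
      (fun r a u => by
        simp only [mul_smul_comm, map_smul, Finset.smul_sum]
        exact Finset.sum_congr rfl fun g _ => smul_comm _ _ _))
  have sRtmul : ∀ (a : A) (u : S), sR (a ⊗ₜ[R] u) = ∑ g : G, a.coeff g • act g (c * u) :=
    fun a u => rfl
  have sRsingle : ∀ (g : G) (r : R) (u : S),
      sR ((MonoidAlgebra.single g r : A) ⊗ₜ[R] u) = r • act g (c * u) := by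
    intro g r u
    rw [sRtmul]
    have hx : ∀ x : G, (MonoidAlgebra.single g r : A).coeff x = if g = x then r else 0 :=
      fun x => Finsupp.single_apply
    rw [Finset.sum_congr rfl fun x _ => by rw [hx x]]
    simp [ite_smul, Finset.sum_ite_eq]
  have hmul : ∀ (a b : A) (u : S),
      sR ((a * b) ⊗ₜ[R] u) = ρ.asAlgebraHom a (sR (b ⊗ₜ[R] u)) := by
    intro a b u
    induction a using MonoidAlgebra.induction_linear with
    | zero => simp
    | add f f' hf hf' => rw [add_mul, TensorProduct.add_tmul, map_add, hf, hf', map_add]; rfl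
    | single g r =>
      induction b using MonoidAlgebra.induction_linear with
      | zero => simp
      | add f f' hf hf' =>
        rw [mul_add, TensorProduct.add_tmul, map_add, hf, hf',
          TensorProduct.add_tmul, map_add, map_add]
      | single h r' =>
        rw [MonoidAlgebra.single_mul_single, sRsingle, sRsingle,
          Representation.asAlgebraHom_single]
        simp only [LinearMap.smul_apply, map_smul, hρg, galAux_mul_apply, mul_smul]
        rw [smul_comm]
  let sMap : (A ⊗[R] S) →ₗ[A] ρ.asModule :=
  { toFun := fun m => sR m
    map_add' := fun m m' => sR.map_add m m'
    map_smul' := by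
      intro a m
      simp only [RingHom.id_apply]
      induction m using TensorProduct.induction_on with
      | zero => rw [smul_zero, map_zero]; exact (map_zero (ρ.asAlgebraHom a)).symm
      | add m m' hm hm' => rw [smul_add, map_add, hm, hm', map_add]; exact (map_add (ρ.asAlgebraHom a) _ _).symm
      | tmul b u =>
        rw [TensorProduct.smul_tmul', smul_eq_mul]
        exact hmul a b u }
  have hcomp : sMap.comp iMap = LinearMap.id := by
    have key : ∀ s : S, sR (iF s) = s := by
      intro s
      rw [show iF s = ∑ g : G, MonoidAlgebra.single g (1 : R) ⊗ₜ[R] (act g⁻¹ s) from rfl,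
        map_sum]
      have h1 : ∀ g : G,
          sR (MonoidAlgebra.single g (1 : R) ⊗ₜ[R] (act g⁻¹ s)) = act g c * s := by
        intro g
        rw [sRsingle, one_smul, map_mul, galAux_mul_apply]
        simp
      rw [Finset.sum_congr rfl fun g _ => h1 g, ← Finset.sum_mul, hc, one_mul]
    exact LinearMap.ext fun t => key t
  exact Module.Projective.of_split iMap sMap hcomp
end

section
/- Let G be a finite p-group and R a commutative ring with pR = 0. Then the augmentation ideal I of the group ring R[G] is a nilpotent ideal. -/
open scoped TensorProduct

private lemma span_central_pow {A : Type*} [Ring A] (c : A) (hc : ∀ y, c * y = y * c) :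
    ∀ n : ℕ, (Ideal.span {c}) ^ n ≤ Ideal.span {c ^ n} := by
  intro n
  induction n with
  | zero => simp
  | succ n ih =>
    rw [Submodule.pow_succ, pow_succ]
    refine (Ideal.mul_mono ih le_rfl).trans ?_
    rw [Ideal.mul_le]
    intro r hr s hs
    obtain ⟨a, rfl⟩ := Submodule.mem_span_singleton.mp hr
    obtain ⟨b, rfl⟩ := Submodule.mem_span_singleton.mp hs
    refine Submodule.mem_span_singleton.mpr ⟨a * b, ?_⟩
    have hcn : c ^ n * b = b * c ^ n := ((show Commute c b from hc b).pow_left n).eq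
    simp only [smul_eq_mul]
    calc a * b * (c ^ n * c) = a * (b * c ^ n) * c := by noncomm_ring
      _ = a * (c ^ n * b) * c := by rw [hcn]
      _ = a * c ^ n * (b * c) := by noncomm_ring

private lemma comap_pow_le {A B : Type*} [Ring A] [Ring B] (f : A →+* B) (J : Ideal B) :
    ∀ n : ℕ, (Ideal.comap f J) ^ n ≤ Ideal.comap f (J ^ n) := by
  intro n
  induction n with
  | zero =>
    rw [Submodule.pow_zero, Submodule.pow_zero, Ideal.one_eq_top, Ideal.one_eq_top, Ideal.comap_top]
  | succ n ih =>
    rw [Submodule.pow_succ, Submodule.pow_succ, Ideal.mul_le]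
    intro r hr s hs
    simp only [Ideal.mem_comap, map_mul]
    exact Ideal.mul_mem_mul (ih hr) hs

universe u v

private lemma ideal_pow_add_le {A : Type*} [Ring A] (I : Ideal A) (a : ℕ) :
    ∀ b : ℕ, I ^ (a + b) ≤ I ^ a * I ^ b := by
  intro b
  induction b with
  | zero =>
    rw [Nat.add_zero, Submodule.pow_zero]
    intro x hx
    simpa using Ideal.mul_mem_mul hx (Submodule.mem_top (x := (1 : A)))
  | succ b ih =>
    rw [← Nat.add_assoc, Submodule.pow_succ, Submodule.pow_succ]
    refine le_trans (Ideal.mul_mono ih le_rfl) ?_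
    rw [Ideal.mul_assoc]

private lemma ideal_pow_mul_le {A : Type*} [Ring A] (I : Ideal A) (m : ℕ) :
    ∀ k : ℕ, I ^ (m * k) ≤ (I ^ m) ^ k := by
  intro k
  induction k with
  | zero => rw [Nat.mul_zero, Submodule.pow_zero, Submodule.pow_zero]
  | succ k ih =>
    rw [Nat.mul_succ, Submodule.pow_succ]
    exact le_trans (ideal_pow_add_le I (m * k) m) (Ideal.mul_mono ih le_rfl)

private lemma aug_nilpotent_aux (p : ℕ) (hp : p.Prime) :
    ∀ (n : ℕ) (G : Type u) [Group G] [Finite G], Nat.card G ≤ n → IsPGroup p G →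
    ∀ (R : Type v) [CommRing R], (p : R) = 0 →
    IsNilpotent (RingHom.ker (MonoidAlgebra.lift R R G 1) : Ideal (MonoidAlgebra R G)) := by
  intro n
  induction n with
  | zero =>
    intro G _ _ hcard _ R _ _
    exact absurd hcard (by simpa using Nat.card_pos.ne')
  | succ n ih =>
    intro G _ _ hcard hG R _ hR
    rcases subsingleton_or_nontrivial G with hGs | hGn
    · -- trivial group: augmentation kernel is ⊥
      refine ⟨1, ?_⟩
      rw [Submodule.pow_one]
      refine le_bot_iff.mp ?_
      intro x hx
      rw [RingHom.mem_ker] at hx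
      have hx1 : x = MonoidAlgebra.single (1 : G) (x.coeff 1) :=
        MonoidAlgebra.ext (Finsupp.ext fun g => by
          rw [Subsingleton.elim g (1 : G), MonoidAlgebra.coeff_single, Finsupp.single_eq_same])
      have ha : x.coeff 1 = 0 := by
        have h2 := congrArg (MonoidAlgebra.lift R R G 1) hx1
        rw [hx] at h2
        simpa [MonoidAlgebra.lift_single] using h2.symm
      rw [Submodule.mem_bot, hx1, ha]
      simp
    rcases subsingleton_or_nontrivial R with hRs | hRn
    · exact ⟨1, by rw [Submodule.pow_one]; exact Subsingleton.elim _ _⟩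
    haveI : Fact p.Prime := ⟨hp⟩
    haveI hcharR : CharP R p := by
      have hdvd : ringChar R ∣ p := ringChar.dvd hR
      rcases hp.eq_one_or_self_of_dvd _ hdvd with h1 | h1
      · exact absurd h1 CharP.ringChar_ne_one
      · rw [← h1]; exact ringChar.charP R
    have hinj : Function.Injective (algebraMap R (MonoidAlgebra R G)) := fun r s hrs =>
      Finsupp.single_injective (1 : G) (congrArg MonoidAlgebra.coeff hrs)
    haveI : CharP (MonoidAlgebra R G) p := by
      constructor
      intro a
      rw [← CharP.cast_eq_zero_iff R p a]
      constructor
      · intro h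
        apply hinj
        rw [map_natCast, h, map_zero]
      · intro h
        rw [← map_natCast (algebraMap R (MonoidAlgebra R G)) a, h, map_zero]
    -- a nontrivial central element
    haveI := hG.center_nontrivial
    obtain ⟨zc, hzc⟩ := exists_ne (1 : Subgroup.center G)
    set z : G := (zc : G) with hzdef
    have hz : z ∈ Subgroup.center G := zc.2
    have hz1 : z ≠ 1 := fun h => hzc (Subtype.ext h)
    set K := Subgroup.zpowers z with hKdef
    haveI : K.Normal := by
      constructor
      intro k hk g
      have hkc : k ∈ Subgroup.center G := Subgroup.zpowers_le.mpr hz hk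
      rw [Subgroup.mem_center_iff.mp hkc g, mul_inv_cancel_right]
      exact hk
    have hcardQ : Nat.card (G ⧸ K) ≤ n := by
      have h1 : Nat.card G = Nat.card (G ⧸ K) * Nat.card K :=
        Subgroup.card_eq_card_quotient_mul_card_subgroup K
      haveI : Nontrivial K :=
        ⟨⟨⟨z, Subgroup.mem_zpowers z⟩, 1, fun h => hz1 (congrArg Subtype.val h)⟩⟩
      have h2 : 1 < Nat.card K := Finite.one_lt_card
      have h3 : 0 < Nat.card (G ⧸ K) := Nat.card_pos
      have h4 : Nat.card G ≤ n + 1 := hcard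
      nlinarith
    obtain ⟨m, hm⟩ := ih (G ⧸ K) hcardQ (hG.to_quotient K) R hR
    set f : G →* G ⧸ K := QuotientGroup.mk' K with hfdef
    set π : MonoidAlgebra R G →+* MonoidAlgebra R (G ⧸ K) :=
      MonoidAlgebra.mapDomainRingHom R f with hπdef
    have hπ_apply : ∀ y : MonoidAlgebra R G, π y = MonoidAlgebra.mapDomain f y := fun y => rfl
    have hfact : (MonoidAlgebra.lift R R (G ⧸ K) 1).toRingHom.comp π
        = (MonoidAlgebra.lift R R G 1).toRingHom := by
      apply MonoidAlgebra.ringHom_ext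
      · intro b
        simp [hπ_apply, MonoidAlgebra.mapDomain_single, MonoidAlgebra.lift_single]
      · intro a
        simp [hπ_apply, MonoidAlgebra.mapDomain_single, MonoidAlgebra.lift_single]
    have hle : RingHom.ker (MonoidAlgebra.lift R R G 1)
        ≤ Ideal.comap π (RingHom.ker (MonoidAlgebra.lift R R (G ⧸ K) 1)) := by
      intro x hx
      rw [RingHom.mem_ker] at hx
      rw [Ideal.mem_comap, RingHom.mem_ker]
      calc (MonoidAlgebra.lift R R (G ⧸ K) 1) (π x)
          = ((MonoidAlgebra.lift R R (G ⧸ K) 1).toRingHom.comp π) x := rfl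
        _ = (MonoidAlgebra.lift R R G 1) x := by rw [hfact]; rfl
        _ = 0 := hx
    set c : MonoidAlgebra R G := MonoidAlgebra.of R G z - 1 with hcdef
    have hzc' : ∀ y : MonoidAlgebra R G,
        MonoidAlgebra.of R G z * y = y * MonoidAlgebra.of R G z := by
      intro y
      induction y using MonoidAlgebra.induction with
      | zero => simp
      | single_add g r y _ _ hy =>
        rw [mul_add, add_mul, hy]
        congr 1
        show MonoidAlgebra.of R G z * MonoidAlgebra.single g r
            = MonoidAlgebra.single g r * MonoidAlgebra.of R G z
        rw [MonoidAlgebra.of_apply, MonoidAlgebra.single_mul_single,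
          MonoidAlgebra.single_mul_single, one_mul, mul_one,
          Subgroup.mem_center_iff.mp hz g]
    have hc : ∀ y, c * y = y * c := fun y => by
      simp only [hcdef, sub_mul, mul_sub, one_mul, mul_one, hzc' y]
    have hker : RingHom.ker π ≤ Ideal.span {c} := by
      intro x hx
      rw [RingHom.mem_ker] at hx
      have hx0 : Finsupp.mapDomain f x.coeff = 0 := congrArg MonoidAlgebra.coeff hx
      set s : (G ⧸ K) → G := fun q => Quotient.out q with hsdef
      have hs : ∀ q, f (s q) = q := fun q => QuotientGroup.out_eq' q
      have hT : ∑ g ∈ x.coeff.support, MonoidAlgebra.single (s (f g)) (x.coeff g)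
          = (0 : MonoidAlgebra R G) := by
        have h2 : Finsupp.mapDomain (s ∘ f) x.coeff = 0 := by
          rw [Finsupp.mapDomain_comp, hx0, Finsupp.mapDomain_zero]
        have h3 := congrArg MonoidAlgebra.ofCoeff h2
        simpa [Finsupp.mapDomain, Finsupp.sum, MonoidAlgebra.ofCoeff_sum,
          MonoidAlgebra.ofCoeff_single] using h3
      have hrepr : x = ∑ g ∈ x.coeff.support,
          (MonoidAlgebra.single g (x.coeff g) - MonoidAlgebra.single (s (f g)) (x.coeff g)) := by
        rw [Finset.sum_sub_distrib, hT, sub_zero]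
        conv_lhs => rw [← MonoidAlgebra.sum_coeff_single x]
        rfl
      rw [hrepr]
      apply Submodule.sum_mem
      intro g _
      have hkK : g * (s (f g))⁻¹ ∈ K := by
        have h3 : f (g * (s (f g))⁻¹) = 1 := by
          rw [map_mul, map_inv, hs, mul_inv_cancel]
        exact (QuotientGroup.eq_one_iff _).mp h3
      obtain ⟨mk', hmk0⟩ := mem_powers_iff_mem_zpowers.mpr hkK
      have hmk : z ^ mk' = g * (s (f g))⁻¹ := hmk0
      have hgeom : MonoidAlgebra.single (g * (s (f g))⁻¹) (1 : R) - 1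
          = (∑ i ∈ Finset.range mk', (MonoidAlgebra.of R G z) ^ i) * c := by
        rw [hcdef, geom_sum_mul]
        congr 1
        rw [← map_pow (MonoidAlgebra.of R G) z, hmk]
        rfl
      have hsplit : MonoidAlgebra.single g (x.coeff g) - MonoidAlgebra.single (s (f g)) (x.coeff g)
          = (MonoidAlgebra.single (g * (s (f g))⁻¹) (1 : R) - 1)
            * MonoidAlgebra.single (s (f g)) (x.coeff g) := by
        rw [sub_mul, one_mul, MonoidAlgebra.single_mul_single, inv_mul_cancel_right, one_mul]
      rw [hsplit, hgeom, mul_assoc, hc, ← mul_assoc]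
      exact Ideal.mul_mem_left _ _ (Ideal.subset_span rfl)
    obtain ⟨e, he⟩ := hG z
    have hcpow : c ^ (p ^ e) = 0 := by
      have h5 := sub_pow_char_pow_of_commute (x := MonoidAlgebra.of R G z)
        (y := (1 : MonoidAlgebra R G)) p e (Commute.one_right _)
      rw [hcdef, h5, one_pow, ← map_pow (MonoidAlgebra.of R G), he, map_one, sub_self]
    refine ⟨m * p ^ e, ?_⟩
    have h4 : (RingHom.ker (MonoidAlgebra.lift R R G 1) : Ideal (MonoidAlgebra R G)) ^ m
        ≤ RingHom.ker π := by
      refine le_trans (Ideal.pow_right_mono hle m) ?_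
      refine le_trans (comap_pow_le π _ m) ?_
      rw [hm]
      intro x hx
      rw [Ideal.mem_comap] at hx
      rw [RingHom.mem_ker]
      simpa using hx
    have h5 : (RingHom.ker (MonoidAlgebra.lift R R G 1) : Ideal (MonoidAlgebra R G))
        ^ (m * p ^ e) ≤ ⊥ := by
      refine le_trans (ideal_pow_mul_le _ m (p ^ e)) ?_
      refine le_trans (Ideal.pow_right_mono (h4.trans hker) (p ^ e)) ?_
      refine le_trans (span_central_pow c hc (p ^ e)) ?_
      rw [hcpow]
      rw [show Ideal.span {(0 : MonoidAlgebra R G)} = ⊥ from by simp]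
    exact le_bot_iff.mp h5

theorem stmt5 (p : ℕ) (hp : p.Prime) (G : Type*) [Group G] [Finite G]
    (hG : IsPGroup p G) (R : Type*) [CommRing R] (hR : (p : R) = 0) :
    IsNilpotent (RingHom.ker (MonoidAlgebra.lift R R G 1) : Ideal (MonoidAlgebra R G)) := by
  exact aug_nilpotent_aux p hp (Nat.card G) G le_rfl hG R hR
end

section
/- Let p be prime, ρ a primitive p-th root of unity (interpreted in ℤ[ρ], with ρ = -1 and ℤ[ρ]=ℤ when p = 2), and η = ρ - 1. There exists a polynomial g(Z) ∈ ℤ[ρ][Z], with g(Z) ≡ -Z modulo η, such that (1 + Zη)^p = 1 + (g(Z) + Z^p)·η^p in ℤ[ρ][Z]. -/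
open scoped NumberField

open Polynomial Finset
theorem stmt9 (p : ℕ+) [Fact (p : ℕ).Prime]
    (ρ : 𝓞 (CyclotomicField p ℚ)) (hρ : IsPrimitiveRoot ρ (p : ℕ)) :
    ∃ g : Polynomial (𝓞 (CyclotomicField p ℚ)),
      (∀ n, (g + Polynomial.X).coeff n ∈ Ideal.span {ρ - 1}) ∧
      (1 + Polynomial.X * Polynomial.C (ρ - 1)) ^ (p : ℕ) =
        1 + (g + Polynomial.X ^ (p : ℕ)) * Polynomial.C ((ρ - 1) ^ (p : ℕ)) := by
  classical
  have hp : (p : ℕ).Prime := Fact.out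
  let P := (p : ℕ)
  have hP : P = (p : ℕ) := rfl
  have hP2 : 2 ≤ P := hp.two_le
  set η : 𝓞 (CyclotomicField p ℚ) := ρ - 1 with hη
  have hηne : η ≠ 0 := sub_ne_zero.mpr (hρ.ne_one hp.one_lt)
  have hsum : (η + 1) ^ P = 1 := by
    have h1 : η + 1 = ρ := by ring
    rw [h1]; exact hρ.pow_eq_one
  -- binomial expansion at the ring level
  have hexp : ∑ k ∈ range (P + 1), η ^ k * (P.choose k : 𝓞 (CyclotomicField p ℚ)) = 1 := by
    have := add_pow η 1 P
    rw [hsum] at this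
    simpa using this.symm
  have hsplit1 : range (P + 1) = insert 0 (insert 1 (Ico 2 (P + 1))) := by
    ext x; simp only [mem_range, mem_insert, mem_Ico]; omega
  have hsplit2 : Ico 2 (P + 1) = insert P (Ico 2 P) := by
    ext x; simp only [mem_insert, mem_Ico]; omega
  have h0 : (0 : ℕ) ∉ insert 1 (Ico 2 (P + 1)) := by simp
  have h1m : (1 : ℕ) ∉ Ico 2 (P + 1) := by simp
  have hPm : P ∉ Ico 2 P := by simp
  have hbase : (P : 𝓞 (CyclotomicField p ℚ)) * η
      + ∑ k ∈ Ico 2 (P + 1), η ^ k * (P.choose k : 𝓞 (CyclotomicField p ℚ)) = 0 := by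
    have := hexp
    rw [hsplit1, Finset.sum_insert h0, Finset.sum_insert h1m] at this
    simp only [pow_zero, one_mul, Nat.choose_zero_right, Nat.cast_one, pow_one,
      Nat.choose_one_right] at this
    linear_combination this
  -- key divisibility: η^(P-1) ∣ p
  have key : ∀ j, j ≤ P - 1 → η ^ j ∣ (P : 𝓞 (CyclotomicField p ℚ)) := by
    intro j
    induction j with
    | zero => intro _; simp
    | succ j ih =>
      intro hj
      have IH : η ^ j ∣ (P : 𝓞 (CyclotomicField p ℚ)) := ih (by omega)
      have hdvd : η ^ (j + 2) ∣ (P : 𝓞 (CyclotomicField p ℚ)) * η := by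
        have heq : (P : 𝓞 (CyclotomicField p ℚ)) * η
            = -∑ k ∈ Ico 2 (P + 1), η ^ k * (P.choose k : 𝓞 (CyclotomicField p ℚ)) := by
          linear_combination hbase
        rw [heq]
        apply dvd_neg.mpr
        apply Finset.dvd_sum
        intro k hk
        simp only [mem_Ico] at hk
        rcases eq_or_lt_of_le (Nat.lt_succ_iff.mp hk.2) with hkP | hkP
        · subst hkP
          simp only [Nat.choose_self, Nat.cast_one, mul_one]
          exact pow_dvd_pow η (by omega)
        · have hch : (P : 𝓞 (CyclotomicField p ℚ)) ∣ (P.choose k : 𝓞 (CyclotomicField p ℚ)) :=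
            Nat.cast_dvd_cast (hp.dvd_choose_self (by omega) hkP)
          have h1 : η ^ j ∣ (P.choose k : 𝓞 (CyclotomicField p ℚ)) := IH.trans hch
          have h2 : η ^ 2 ∣ η ^ k := pow_dvd_pow η hk.1
          have h4 := mul_dvd_mul h2 h1
          rw [← pow_add] at h4
          exact (pow_dvd_pow η (by omega : j + 2 ≤ 2 + j)).trans h4
      have h3 : η ^ (j + 1) * η ∣ (P : 𝓞 (CyclotomicField p ℚ)) * η := by
        rw [← pow_succ]
        exact hdvd
      exact (mul_dvd_mul_iff_right hηne).mp h3
  have keyP : η ^ (P - 1) ∣ (P : 𝓞 (CyclotomicField p ℚ)) := key (P - 1) le_rfl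
  -- ring-level: η^(P+1) ∣ P·η + η^P
  have hRdvd : η ^ (P + 1) ∣ (P : 𝓞 (CyclotomicField p ℚ)) * η + η ^ P := by
    have heq : (P : 𝓞 (CyclotomicField p ℚ)) * η + η ^ P
        = -∑ k ∈ Ico 2 P, η ^ k * (P.choose k : 𝓞 (CyclotomicField p ℚ)) := by
      have := hbase
      rw [hsplit2, Finset.sum_insert hPm] at this
      simp only [Nat.choose_self, Nat.cast_one, mul_one] at this
      linear_combination this
    rw [heq]
    apply dvd_neg.mpr
    apply Finset.dvd_sum
    intro k hk
    simp only [mem_Ico] at hk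
    have hch : (P : 𝓞 (CyclotomicField p ℚ)) ∣ (P.choose k : 𝓞 (CyclotomicField p ℚ)) :=
      Nat.cast_dvd_cast (hp.dvd_choose_self (by omega) hk.2)
    have h1 : η ^ (P - 1) ∣ (P.choose k : 𝓞 (CyclotomicField p ℚ)) := keyP.trans hch
    have h2 : η ^ 2 ∣ η ^ k := pow_dvd_pow η hk.1
    have h4 := mul_dvd_mul h2 h1
    rw [← pow_add] at h4
    exact (pow_dvd_pow η (by omega : P + 1 ≤ 2 + (P - 1))).trans h4
  -- polynomial level
  set c : Polynomial (𝓞 (CyclotomicField p ℚ)) := C η with hc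
  have hadd : (1 + X * c) ^ P =
      ∑ k ∈ range (P + 1), (X * c) ^ k * (P.choose k : Polynomial (𝓞 (CyclotomicField p ℚ))) := by
    rw [add_comm, add_pow]
    simp only [one_pow, mul_one]
  have hDeq : (1 + X * c) ^ P - 1 - (X ^ P - X) * c ^ P
      = X * ((P : Polynomial (𝓞 (CyclotomicField p ℚ))) * c + c ^ P)
        + ∑ k ∈ Ico 2 P, (X * c) ^ k * (P.choose k : Polynomial (𝓞 (CyclotomicField p ℚ))) := by
    rw [hadd, hsplit1, Finset.sum_insert h0, Finset.sum_insert h1m, hsplit2,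
      Finset.sum_insert hPm]
    simp only [pow_zero, one_mul, Nat.choose_zero_right, Nat.cast_one, pow_one,
      Nat.choose_one_right, Nat.choose_self, mul_one]
    ring
  have hcP : c ^ (P + 1) ∣ (1 + X * c) ^ P - 1 - (X ^ P - X) * c ^ P := by
    rw [hDeq]
    apply dvd_add
    · have h5 : c ^ (P + 1) ∣ (P : Polynomial (𝓞 (CyclotomicField p ℚ))) * c + c ^ P := by
        have := map_dvd (C : 𝓞 (CyclotomicField p ℚ) →+* Polynomial (𝓞 (CyclotomicField p ℚ)))
          hRdvd
        simpa only [map_add, map_mul, map_pow, map_natCast] using this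
      exact h5.mul_left X
    · apply Finset.dvd_sum
      intro k hk
      simp only [mem_Ico] at hk
      have hch : (P : Polynomial (𝓞 (CyclotomicField p ℚ)))
          ∣ (P.choose k : Polynomial (𝓞 (CyclotomicField p ℚ))) :=
        Nat.cast_dvd_cast (hp.dvd_choose_self (by omega) hk.2)
      have hcp : c ^ (P - 1) ∣ (P : Polynomial (𝓞 (CyclotomicField p ℚ))) := by
        have := map_dvd (C : 𝓞 (CyclotomicField p ℚ) →+* Polynomial (𝓞 (CyclotomicField p ℚ)))
          keyP
        simpa only [map_pow, map_natCast] using this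
      have h1 : c ^ (P - 1) ∣ (P.choose k : Polynomial (𝓞 (CyclotomicField p ℚ))) :=
        hcp.trans hch
      have h2 : c ^ 2 ∣ (X * c) ^ k := by
        rw [mul_pow]
        exact (pow_dvd_pow c hk.1).mul_left _
      have h4 := mul_dvd_mul h2 h1
      rw [← pow_add] at h4
      exact (pow_dvd_pow c (by omega : P + 1 ≤ 2 + (P - 1))).trans h4
  obtain ⟨q, hq⟩ := hcP
  refine ⟨c * q - X, ?_, ?_⟩
  · intro n
    have h6 : c * q - X + X = c * q := by ring
    rw [h6, hc, coeff_C_mul]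
    exact Ideal.mem_span_singleton.mpr (dvd_mul_right η _)
  · have hCP : C (η ^ P) = c ^ P := by rw [hc, C_pow]
    rw [hCP]
    rw [pow_succ'] at hq
    linear_combination hq
end

section
/- Let G' be a finite group with normal subgroup N', acting on a tower of commutative rings T ⊇ S ⊇ R such that T/S is N'-Galois and S/R is (G'/N')-Galois (with the induced actions). Then T/R is G'-Galois. -/
open scoped TensorProduct

section Aux

set_option maxHeartbeats 1000000

@[simp] lemma galMap_tmul (R S G : Type*) [CommRing R] [CommRing S] [Algebra R S]
    [Group G] (act : G →* (S ≃ₐ[R] S)) (s t : S) (g : G) :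
    galMap R S G act (s ⊗ₜ[R] t) g = s * act g t := rfl

variable (R S T : Type*) [CommRing R] [CommRing S] [CommRing T]
  [Algebra R S] [Algebra S T] [Algebra R T] [IsScalarTower R S T]

noncomputable def algL : S →ₗ[R] T := (IsScalarTower.toAlgHom R S T).toLinearMap

@[simp] lemma algL_apply (s : S) : algL R S T s = algebraMap S T s := rfl

variable {R S T}

lemma smul_map_eq (s : S) (f g : S →ₗ[R] T) (w : S ⊗[R] S) :
    s • TensorProduct.map f g w
      = TensorProduct.map ((LinearMap.mulLeft R (algebraMap S T s)).comp f) g w := by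
  induction w using TensorProduct.induction_on with
  | zero => simp
  | tmul u v => simp [TensorProduct.smul_tmul', Algebra.smul_def]
  | add x y hx hy => simp [smul_add, hx, hy]

noncomputable def combAux (β : T ≃ₐ[R] T) (e : S ⊗[R] S)
    (hbal : ∀ s : S, TensorProduct.map (LinearMap.mulLeft R s) LinearMap.id e
      = TensorProduct.map LinearMap.id (LinearMap.mulLeft R s) e) :
    T ⊗[S] T →ₗ[S] T ⊗[R] T :=
  TensorProduct.lift <| LinearMap.mk₂ S
    (fun c d => TensorProduct.map
        ((LinearMap.mulLeft R c).comp (algL R S T))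
        (β.toLinearMap.comp ((LinearMap.mulLeft R d).comp (algL R S T))) e)
    (fun c c' d => by
      have h1 : (LinearMap.mulLeft R (c + c')).comp (algL R S T)
          = (LinearMap.mulLeft R c).comp (algL R S T)
            + (LinearMap.mulLeft R c').comp (algL R S T) := by
        ext u; simp [add_mul]
      rw [h1]
      clear hbal h1
      induction e using TensorProduct.induction_on with
      | zero => simp
      | tmul u v => simp [TensorProduct.add_tmul]
      | add x y hx hy => simp only [map_add, hx, hy]; abel)
    (fun s c d => by
      rw [smul_map_eq s]
      have h1 : (LinearMap.mulLeft R (s • c)).comp (algL R S T)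
          = (LinearMap.mulLeft R (algebraMap S T s)).comp
              ((LinearMap.mulLeft R c).comp (algL R S T)) := by
        ext u; simp [Algebra.smul_def, mul_assoc, mul_left_comm]
      rw [h1])
    (fun c d d' => by
      have h1 : β.toLinearMap.comp ((LinearMap.mulLeft R (d + d')).comp (algL R S T))
          = β.toLinearMap.comp ((LinearMap.mulLeft R d).comp (algL R S T))
            + β.toLinearMap.comp ((LinearMap.mulLeft R d').comp (algL R S T)) := by
        ext u; simp [add_mul]
      rw [h1]
      clear hbal h1
      induction e using TensorProduct.induction_on with
      | zero => simp
      | tmul u v => simp [TensorProduct.tmul_add]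
      | add x y hx hy => simp only [map_add, hx, hy]; abel)
    (fun s c d => by
      rw [smul_map_eq s]
      have h1 : β.toLinearMap.comp ((LinearMap.mulLeft R (s • d)).comp (algL R S T))
          = (β.toLinearMap.comp ((LinearMap.mulLeft R d).comp (algL R S T))).comp
              (LinearMap.mulLeft R s) := by
        ext v
        simp [Algebra.smul_def, map_mul, mul_left_comm, mul_comm]
      rw [h1]
      have h2 : ∀ (f : S →ₗ[R] T) (g : S →ₗ[R] T),
          TensorProduct.map f (g.comp (LinearMap.mulLeft R s)) e
            = TensorProduct.map (f.comp (LinearMap.mulLeft R s)) g e := by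
        intro f g
        conv_lhs => rw [← LinearMap.comp_id f]
        conv_rhs => rw [← LinearMap.comp_id g]
        rw [TensorProduct.map_comp, TensorProduct.map_comp, LinearMap.comp_apply,
          LinearMap.comp_apply, ← hbal s]
      rw [h2]
      have h3 : ((LinearMap.mulLeft R c).comp (algL R S T)).comp (LinearMap.mulLeft R s)
          = (LinearMap.mulLeft R (algebraMap S T s)).comp
              ((LinearMap.mulLeft R c).comp (algL R S T)) := by
        ext u; simp [mul_assoc, mul_left_comm]
      rw [h3])

lemma combAux_tmul (β : T ≃ₐ[R] T) (e : S ⊗[R] S)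
    (hbal : ∀ s : S, TensorProduct.map (LinearMap.mulLeft R s) LinearMap.id e
      = TensorProduct.map LinearMap.id (LinearMap.mulLeft R s) e) (c d : T) :
    combAux β e hbal (c ⊗ₜ[S] d) = TensorProduct.map
        ((LinearMap.mulLeft R c).comp (algL R S T))
        (β.toLinearMap.comp ((LinearMap.mulLeft R d).comp (algL R S T))) e := rfl

noncomputable def twistMap (β : T ≃ₐ[R] T) : T ⊗[R] T →ₗ[R] T ⊗[S] T :=
  TensorProduct.lift (LinearMap.mk₂ R (fun a b => a ⊗ₜ[S] β b)
    (fun a a' b => by simp [TensorProduct.add_tmul])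
    (fun r a b => by simp [TensorProduct.smul_tmul'])
    (fun a b b' => by simp [TensorProduct.tmul_add])
    (fun r a b => by simp [TensorProduct.tmul_smul]))

@[simp] lemma twistMap_tmul (β : T ≃ₐ[R] T) (a b : T) :
    twistMap (R := R) (S := S) β (a ⊗ₜ[R] b) = a ⊗ₜ[S] β b := rfl

end Aux

set_option maxHeartbeats 1000000 in
theorem stmt14 (R S T : Type*) [CommRing R] [CommRing S] [CommRing T]
    [Algebra R S] [Algebra S T] [Algebra R T] [IsScalarTower R S T]
    (G : Type*) [Group G] [Finite G] (N : Subgroup G) [N.Normal]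
    (act : G →* (T ≃ₐ[R] T))
    (actN : N →* (T ≃ₐ[S] T))
    (hN : ∀ (n : N) (t : T), actN n t = act (n : G) t)
    (actQ : (G ⧸ N) →* (S ≃ₐ[R] S))
    (hQ : ∀ (g : G) (s : S),
      algebraMap S T (actQ (QuotientGroup.mk g) s) = act g (algebraMap S T s))
    (hTS : IsGaloisExt S T N actN)
    (hSR : IsGaloisExt R S (G ⧸ N) actQ) :
    IsGaloisExt R T G act := by
  classical
  obtain ⟨hSfin, hSproj, hSbij⟩ := hSR
  obtain ⟨hTfin, hTproj, hTbij⟩ := hTS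
  haveI := hSfin; haveI := hTfin; haveI := hSproj; haveI := hTproj
  haveI : Fintype G := Fintype.ofFinite G
  haveI : Fintype (G ⧸ N) := Fintype.ofFinite _
  refine ⟨Module.Finite.trans S T, ?_, ?_⟩
  · -- projectivity is transitive
    obtain ⟨sS, hsS⟩ := hSproj
    obtain ⟨sT, hsT⟩ := hTproj
    refine Module.Projective.of_split (R := R) (M := T →₀ (S →₀ R))
      ((Finsupp.mapRange.linearMap sS).comp (sT.restrictScalars R))
      (((Finsupp.linearCombination S id).restrictScalars R).comp
        (Finsupp.mapRange.linearMap (Finsupp.linearCombination R id))) ?_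
    ext x
    simp only [LinearMap.comp_apply, LinearMap.restrictScalars_apply,
      Finsupp.mapRange.linearMap_apply, LinearMap.id_apply]
    rw [Finsupp.mapRange_mapRange]
    have hmr : Finsupp.mapRange (⇑(Finsupp.linearCombination R id) ∘ ⇑sS)
        (by simp) (sT x) = sT x := by
      ext a
      simp only [Finsupp.mapRange_apply, Function.comp_apply]
      exact hsS _
    rw [hmr]
    exact hsT x
  · -- bijectivity
    obtain ⟨e_S, heS⟩ := hSbij.2 (fun q => if q = 1 then (1 : S) else 0)
    have keyQ1 : ∀ (s : S) (w : S ⊗[R] S) (q : G ⧸ N),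
        galMap R S (G ⧸ N) actQ
          (TensorProduct.map (LinearMap.mulLeft R s) LinearMap.id w) q
          = s * galMap R S (G ⧸ N) actQ w q := by
      intro s w q
      induction w using TensorProduct.induction_on with
      | zero => simp
      | tmul u v => simp [mul_assoc]
      | add x y hx hy => simp [hx, hy, mul_add]
    have keyQ1' : ∀ (s : S) (w : S ⊗[R] S) (q : G ⧸ N),
        galMap R S (G ⧸ N) actQ
          (TensorProduct.map LinearMap.id (LinearMap.mulLeft R s) w) q
          = actQ q s * galMap R S (G ⧸ N) actQ w q := by
      intro s w q
      induction w using TensorProduct.induction_on with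
      | zero => simp
      | tmul u v => simp [map_mul, mul_left_comm]
      | add x y hx hy => simp [hx, hy, mul_add]
    have hbal : ∀ s : S, TensorProduct.map (LinearMap.mulLeft R s) LinearMap.id e_S
        = TensorProduct.map LinearMap.id (LinearMap.mulLeft R s) e_S := by
      intro s
      apply hSbij.1
      funext q
      rw [keyQ1, keyQ1', heS]
      by_cases hq : q = 1 <;> simp [hq]
    constructor
    · -- injectivity
      suffices hker : ∀ z : T ⊗[R] T, galMap R T G act z = 0 → z = 0 by
        intro x y hxy
        have := hker (x - y) (by rw [map_sub, hxy, sub_self])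
        exact sub_eq_zero.mp this
      intro z hz
      have keyA : ∀ (g : G) (w : T ⊗[R] T) (n : N),
          galMap S T N actN (twistMap (R := R) (S := S) (act g) w) n
            = galMap R T G act w ((n : G) * g) := by
        intro g w n
        induction w using TensorProduct.induction_on with
        | zero => simp
        | tmul a b =>
          rw [twistMap_tmul]
          simp [hN, map_mul, AlgEquiv.mul_apply]
        | add x y hx hy => simp [hx, hy]
      have hAz : ∀ g : G, twistMap (R := R) (S := S) (act g) z = 0 := by
        intro g
        apply hTbij.1
        rw [map_zero]
        funext n
        rw [keyA, hz]
        simp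
      have keyQ2 : ∀ (p : G ⧸ N) (w : S ⊗[R] S) (q : G ⧸ N),
          galMap R S (G ⧸ N) actQ
            (TensorProduct.map LinearMap.id (actQ p).toLinearMap w) q
            = galMap R S (G ⧸ N) actQ w (q * p) := by
        intro p w q
        induction w using TensorProduct.induction_on with
        | zero => simp
        | tmul u v => simp [map_mul, AlgEquiv.mul_apply]
        | add x y hx hy => simp [hx, hy]
      have hW : ∑ q : G ⧸ N,
          TensorProduct.map LinearMap.id (actQ q⁻¹).toLinearMap e_S
            = (1 : S) ⊗ₜ[R] (1 : S) := by
        apply hSbij.1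
        funext q'
        rw [map_sum]
        simp only [Finset.sum_apply, keyQ2, heS]
        simp only [mul_inv_eq_one]
        rw [Finset.sum_ite_eq]
        simp
      have keyΨ : ∀ w : T ⊗[R] T,
          ∑ q : G ⧸ N, combAux (act ((Quotient.out q)⁻¹)) e_S hbal
            (twistMap (R := R) (S := S) (act (Quotient.out q)) w) = w := by
        intro w
        induction w using TensorProduct.induction_on with
        | zero => simp
        | add x y hx hy =>
          simp only [map_add, Finset.sum_add_distrib, hx, hy]
        | tmul a b =>
          have step : ∀ q : G ⧸ N,
              combAux (act ((Quotient.out q)⁻¹)) e_S hbal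
                (twistMap (R := R) (S := S) (act (Quotient.out q)) (a ⊗ₜ[R] b))
                = TensorProduct.map ((LinearMap.mulLeft R a).comp (algL R S T))
                    (((LinearMap.mulLeft R b).comp (algL R S T)).comp
                      (actQ q⁻¹).toLinearMap) e_S := by
            intro q
            rw [twistMap_tmul, combAux_tmul]
            have hsec : ((act ((Quotient.out q)⁻¹)).toLinearMap.comp
                ((LinearMap.mulLeft R ((act (Quotient.out q)) b)).comp (algL R S T)))
                = ((LinearMap.mulLeft R b).comp (algL R S T)).comp
                    (actQ q⁻¹).toLinearMap := by
              ext v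
              have hv : (act ((Quotient.out q)⁻¹)) (algebraMap S T v)
                  = algebraMap S T (actQ q⁻¹ v) := by
                have hmk : (QuotientGroup.mk ((Quotient.out q)⁻¹) : G ⧸ N) = q⁻¹ := by
                  have h' : (QuotientGroup.mk ((Quotient.out q)⁻¹) : G ⧸ N)
                      = (QuotientGroup.mk (Quotient.out q) : G ⧸ N)⁻¹ := rfl
                  rw [h', QuotientGroup.out_eq']
                rw [← hQ ((Quotient.out q)⁻¹) v, hmk]
              simp only [LinearMap.comp_apply, AlgEquiv.toLinearMap_apply,
                LinearMap.mulLeft_apply, algL_apply]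
              rw [map_mul, hv, ← AlgEquiv.mul_apply, ← map_mul, inv_mul_cancel, map_one,
                AlgEquiv.one_apply]
            rw [hsec]
          rw [Finset.sum_congr rfl (fun q _ => step q)]
          have step2 : ∀ q : G ⧸ N,
              TensorProduct.map ((LinearMap.mulLeft R a).comp (algL R S T))
                (((LinearMap.mulLeft R b).comp (algL R S T)).comp (actQ q⁻¹).toLinearMap) e_S
              = (TensorProduct.map ((LinearMap.mulLeft R a).comp (algL R S T))
                  ((LinearMap.mulLeft R b).comp (algL R S T)))
                  (TensorProduct.map LinearMap.id (actQ q⁻¹).toLinearMap e_S) := by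
            intro q
            conv_lhs =>
              rw [show ((LinearMap.mulLeft R a).comp (algL R S T))
                  = ((LinearMap.mulLeft R a).comp (algL R S T)).comp LinearMap.id from
                  (LinearMap.comp_id _).symm]
            rw [TensorProduct.map_comp, LinearMap.comp_apply]
          rw [Finset.sum_congr rfl (fun q _ => step2 q), ← map_sum, hW]
          simp
      have hfin := keyΨ z
      rw [Finset.sum_congr rfl
        (fun q _ => by rw [hAz (Quotient.out q), map_zero])] at hfin
      rw [Finset.sum_const, smul_zero] at hfin
      exact hfin.symm
    · -- surjectivity
      obtain ⟨e_T, heT⟩ := hTbij.2 (fun n => if n = 1 then (1 : T) else 0)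
      have key0 : ∀ (c d : T) (h : G) (w : S ⊗[R] S),
          galMap R T G act (TensorProduct.map ((LinearMap.mulLeft R c).comp (algL R S T))
            ((LinearMap.mulLeft R d).comp (algL R S T)) w) h
            = c * act h d * algebraMap S T
                (galMap R S (G ⧸ N) actQ w (QuotientGroup.mk h)) := by
        intro c d h w
        induction w using TensorProduct.induction_on with
        | zero => simp
        | tmul u v =>
          simp only [TensorProduct.map_tmul, LinearMap.comp_apply, LinearMap.mulLeft_apply,
            algL_apply, galMap_tmul, map_mul]
          rw [← hQ h v]
          ring
        | add x y hx hy => simp [hx, hy, map_add, mul_add, add_mul]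
      have hrefl : ∀ d : T, ((AlgEquiv.refl : T ≃ₐ[R] T).toLinearMap.comp
          ((LinearMap.mulLeft R d).comp (algL R S T)))
          = (LinearMap.mulLeft R d).comp (algL R S T) := by
        intro d; ext v; simp
      have key1 : ∀ (x : T ⊗[S] T) (h : G),
          galMap R T G act (combAux (AlgEquiv.refl) e_S hbal x) h
            = if hh : h ∈ N then galMap S T N actN x ⟨h, hh⟩ else 0 := by
        intro x h
        by_cases hh : h ∈ N
        · rw [dif_pos hh]
          induction x using TensorProduct.induction_on with
          | zero => simp
          | tmul c d =>
            rw [combAux_tmul, hrefl, key0, heS]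
            have h1 : QuotientGroup.mk h = (1 : G ⧸ N) := (QuotientGroup.eq_one_iff h).mpr hh
            rw [h1]
            simp [hN ⟨h, hh⟩ d]
          | add x y hx hy => simp [map_add, hx, hy]
        · rw [dif_neg hh]
          induction x using TensorProduct.induction_on with
          | zero => simp
          | tmul c d =>
            rw [combAux_tmul, hrefl, key0, heS]
            have h1 : QuotientGroup.mk h ≠ (1 : G ⧸ N) :=
              fun hc => hh ((QuotientGroup.eq_one_iff h).mp hc)
            simp [h1]
          | add x y hx hy => simp [map_add, hx, hy]
      have hE : ∀ h : G, galMap R T G act (combAux (AlgEquiv.refl) e_S hbal e_T) h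
          = if h = 1 then 1 else 0 := by
        intro h
        rw [key1]
        by_cases hh : h ∈ N
        · rw [dif_pos hh, heT]
          have hiff : ((⟨h, hh⟩ : N) = 1) ↔ h = 1 := by
            simp [Subtype.ext_iff]
          by_cases h1 : h = 1 <;> simp [hiff, h1]
        · rw [dif_neg hh]
          have : h ≠ 1 := fun e => hh (e ▸ N.one_mem)
          simp [this]
      have keysurj : ∀ (t : T) (g : G) (w : T ⊗[R] T) (h : G),
          galMap R T G act
            (TensorProduct.map (LinearMap.mulLeft R t) (act g⁻¹).toLinearMap w) h
            = t * galMap R T G act w (h * g⁻¹) := by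
        intro t g w h
        induction w using TensorProduct.induction_on with
        | zero => simp
        | tmul a b => simp [map_mul, AlgEquiv.mul_apply, mul_assoc]
        | add x y hx hy => simp only [map_add, Pi.add_apply, hx, hy, mul_add]
      intro f
      refine ⟨∑ g : G, TensorProduct.map (LinearMap.mulLeft R (f g))
        (act g⁻¹).toLinearMap (combAux (AlgEquiv.refl) e_S hbal e_T), ?_⟩
      funext h
      rw [map_sum]
      simp only [Finset.sum_apply, keysurj, hE, mul_inv_eq_one]
      simp only [mul_ite, mul_one, mul_zero]
      rw [Finset.sum_ite_eq]
      simp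
end

section
/- Let H ⊆ G be finite groups and S/R an H-Galois extension of commutative rings. Then the coinduced algebra Ind_H^G(S) = Hom_{ℤ[H]}(ℤ[G], S), with G acting by (g·t)(x) = t(xg) and pointwise multiplication, is a G-Galois extension of R. -/
open scoped TensorProduct

/-- The coinduced algebra `Ind_H^G(S) = Hom_{ℤ[H]}(ℤ[G], S)`, realized as the
`R`-subalgebra of `∏_{g ∈ G} S` consisting of the `H`-equivariant functions
(a ℤ[H]-linear map out of ℤ[G] is determined by its values on the basis `G`). -/
def indAlg (R S : Type*) [CommRing R] [CommRing S] [Algebra R S]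
    {G : Type*} [Group G] (H : Subgroup G) (act : H →* (S ≃ₐ[R] S)) :
    Subalgebra R (G → S) where
  carrier := {t | ∀ (h : H) (x : G), t ((h : G) * x) = act h (t x)}
  mul_mem' := fun {a b} ha hb h x => by simp [ha h x, hb h x]
  one_mem' := fun h x => by simp
  add_mem' := fun {a b} ha hb h x => by simp [ha h x, hb h x]
  zero_mem' := fun h x => by simp
  algebraMap_mem' := fun r h x => by simp [Pi.algebraMap_apply]

/-- The coinduced `G`-action on `Ind_H^G(S)`: `(g • t)(x) = t(xg)`. -/
def indActEquiv (R S : Type*) [CommRing R] [CommRing S] [Algebra R S]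
    {G : Type*} [Group G] (H : Subgroup G) (act : H →* (S ≃ₐ[R] S)) (g : G) :
    indAlg R S H act ≃ₐ[R] indAlg R S H act where
  toFun t := ⟨fun x => (t : G → S) (x * g), fun h x => by
    simpa [mul_assoc] using t.2 h (x * g)⟩
  invFun t := ⟨fun x => (t : G → S) (x * g⁻¹), fun h x => by
    simpa [mul_assoc] using t.2 h (x * g⁻¹)⟩
  left_inv t := by ext x; simp [mul_assoc]
  right_inv t := by ext x; simp [mul_assoc]
  map_mul' a b := by ext x; rfl
  map_add' a b := by ext x; rfl
  commutes' r := by ext x; rfl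

/-- The coinduced `G`-action on `Ind_H^G(S)` as a homomorphism into automorphisms. -/
def indActHom (R S : Type*) [CommRing R] [CommRing S] [Algebra R S]
    {G : Type*} [Group G] (H : Subgroup G) (act : H →* (S ≃ₐ[R] S)) :
    G →* (indAlg R S H act ≃ₐ[R] indAlg R S H act) where
  toFun g := indActEquiv R S H act g
  map_one' := by
    apply AlgEquiv.ext; intro t; apply Subtype.ext; funext x
    simp [indActEquiv]
  map_mul' g g' := by
    apply AlgEquiv.ext; intro t; apply Subtype.ext; funext x
    simp [indActEquiv, mul_assoc]


/-! Choosing representatives `c̄` of the right cosets `c ∈ H\G` identifies `Ind_H^G(S)` with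
`S^{H\G}`, so it is finite projective over `R`, and `Ind ⊗_R Ind ≅ ∏_{c, d} S ⊗_R S`.
A family `u : G → Ind` is determined by the coefficients `u (c̄⁻¹ h d̄) (c̄)` with `h ∈ H`, since
every `g` is `c̄⁻¹ h d̄` for `d = H c̄ g`. On the image of the Galois map of `Ind` these coefficients
are the values at `h` of the Galois map of `S` on the `(c, d)` component, so bijectivity of the
latter transfers to the former. -/

instance Module.Projective.pi_of_finite {R ι : Type*} [Semiring R] [Finite ι] {M : ι → Type*}
    [∀ i, AddCommMonoid (M i)] [∀ i, Module R (M i)] [∀ i, Module.Projective R (M i)] :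
    Module.Projective R (Π i, M i) := by
  cases nonempty_fintype ι
  classical
  exact .of_equiv (DFinsupp.linearEquivFunOnFintype (R := R) (M := M))

abbrev RightCosets {G : Type*} [Group G] (H : Subgroup G) : Type _ :=
  Quotient (QuotientGroup.rightRel H)

namespace RightCosets

variable {G : Type*} [Group G] {H : Subgroup G}

theorem mul_out_inv_mem {x : G} {c : RightCosets H} (hc : Quotient.mk _ x = c) :
    x * c.out⁻¹ ∈ H := by
  have hrel := Quotient.exact (hc.trans c.out_eq.symm)
  simpa using H.inv_mem (QuotientGroup.rightRel_apply.mp hrel)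

theorem mk_mul_of_mem {k : G} (hk : k ∈ H) (x : G) :
    (Quotient.mk _ (k * x) : RightCosets H) = Quotient.mk _ x :=
  Quotient.sound (QuotientGroup.rightRel_apply.mpr (by simpa using H.inv_mem hk))

end RightCosets

open RightCosets

section Induced

variable {R S : Type*} [CommRing R] [CommRing S] [Algebra R S]
  {G : Type*} [Group G] {H : Subgroup G} (act : H →* (S ≃ₐ[R] S))

theorem indAlg_apply_of_mk_eq (t : indAlg R S H act) {x : G} {c : RightCosets H}
    (hc : Quotient.mk _ x = c) :
    (t : G → S) x = act ⟨x * c.out⁻¹, mul_out_inv_mem hc⟩ ((t : G → S) c.out) := by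
  simpa using t.2 ⟨x * c.out⁻¹, mul_out_inv_mem hc⟩ c.out

theorem indAlg_ext {t t' : indAlg R S H act}
    (h : ∀ c : RightCosets H, (t : G → S) c.out = (t' : G → S) c.out) : t = t' := by
  ext x
  rw [indAlg_apply_of_mk_eq act t rfl, indAlg_apply_of_mk_eq act t' rfl, h]

theorem mem_indAlg_of_apply_of_mk_eq {t : G → S} (f : RightCosets H → S)
    (ht : ∀ {x : G} {c : RightCosets H} (hc : Quotient.mk _ x = c),
      t x = act ⟨x * c.out⁻¹, mul_out_inv_mem hc⟩ (f c)) :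
    t ∈ indAlg R S H act := by
  intro h x
  rw [ht (mk_mul_of_mem h.2 x), ht rfl, ← AlgEquiv.mul_apply, ← map_mul]
  congr 2
  ext
  simp [mul_assoc]

noncomputable def indOfCosets (f : RightCosets H → S) : indAlg R S H act :=
  ⟨fun x => act ⟨x * (Quotient.mk _ x : RightCosets H).out⁻¹, mul_out_inv_mem rfl⟩
      (f (Quotient.mk _ x)),
    mem_indAlg_of_apply_of_mk_eq act f (by rintro x c rfl; rfl)⟩

theorem indOfCosets_apply_of_mk_eq (f : RightCosets H → S) {x : G} {c : RightCosets H}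
    (hc : Quotient.mk _ x = c) :
    (indOfCosets act f : G → S) x = act ⟨x * c.out⁻¹, mul_out_inv_mem hc⟩ (f c) := by
  subst hc; rfl

theorem indOfCosets_apply_out (f : RightCosets H → S) (c : RightCosets H) :
    (indOfCosets act f : G → S) c.out = f c := by
  rw [indOfCosets_apply_of_mk_eq act f c.out_eq, (H.mk_eq_one).mpr (mul_inv_cancel _),
    map_one, AlgEquiv.one_apply]

noncomputable def indEquivCosets : indAlg R S H act ≃ₗ[R] (RightCosets H → S) where
  toFun t c := (t : G → S) c.out
  map_add' _ _ := rfl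
  map_smul' _ _ := rfl
  invFun := indOfCosets act
  left_inv _ := indAlg_ext act (indOfCosets_apply_out act _)
  right_inv f := funext (indOfCosets_apply_out act f)

noncomputable def cosetCoeffs :
    (G → indAlg R S H act) →ₗ[R] (RightCosets H → RightCosets H → H → S) where
  toFun u c d h := (u (c.out⁻¹ * h * d.out) : G → S) c.out
  map_add' _ _ := rfl
  map_smul' _ _ := rfl

theorem cosetCoeffs_injective : Function.Injective (cosetCoeffs act) := by
  intro u u' huu'
  funext g
  refine indAlg_ext act fun c => ?_
  set d : RightCosets H := Quotient.mk _ (c.out * g)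
  have hg : c.out⁻¹ * (c.out * g * d.out⁻¹) * d.out = g := by group
  simpa [cosetCoeffs, hg] using
    congr_fun (congr_fun (congr_fun huu' c) d) ⟨c.out * g * d.out⁻¹, mul_out_inv_mem rfl⟩

variable [Fintype (RightCosets H)] [DecidableEq (RightCosets H)]

noncomputable def indTensorEquiv : indAlg R S H act ⊗[R] indAlg R S H act ≃ₗ[R]
    (RightCosets H → RightCosets H → S ⊗[R] S) :=
  TensorProduct.congr (indEquivCosets act) (indEquivCosets act) ≪≫ₗ TensorProduct.piLeft .. ≪≫ₗ
    LinearEquiv.piCongrRight fun _ => TensorProduct.piRight ..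

theorem indTensorEquiv_tmul (t t' : indAlg R S H act) :
    indTensorEquiv act (t ⊗ₜ t') = fun c d => (t : G → S) c.out ⊗ₜ (t' : G → S) d.out :=
  rfl

theorem cosetCoeffs_galMap (z : indAlg R S H act ⊗[R] indAlg R S H act) :
    cosetCoeffs act (galMap R (indAlg R S H act) G (indActHom R S H act) z) =
      fun c d => galMap R S H act (indTensorEquiv act z c d) := by
  induction z using TensorProduct.induction_on with
  | zero => funext c d; simp
  | add z z' hz hz' => funext c d; simp [hz, hz']
  | tmul t t' =>
    funext c d h
    rw [indTensorEquiv_tmul]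
    show (t : G → S) c.out * (t' : G → S) (c.out * (c.out⁻¹ * h * d.out)) =
      (t : G → S) c.out * act h ((t' : G → S) d.out)
    rw [show c.out * (c.out⁻¹ * h * d.out) = h * d.out by group, t'.2 h d.out]

end Induced

theorem stmt15 (R S : Type*) [CommRing R] [CommRing S] [Algebra R S]
    (G : Type*) [Group G] [Finite G] (H : Subgroup G)
    (act : H →* (S ≃ₐ[R] S)) (hgal : IsGaloisExt R S H act) :
    IsGaloisExt R (indAlg R S H act) G (indActHom R S H act) := by
  classical
  obtain ⟨_, _, hbij⟩ := hgal
  let _ : Fintype (RightCosets H) := Fintype.ofFinite _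
  refine ⟨.equiv (indEquivCosets act).symm, .of_equiv (indEquivCosets act).symm, ?_⟩
  have hfactor : cosetCoeffs act ∘ galMap R (indAlg R S H act) G (indActHom R S H act) =
      ((galMap R S H act ∘ ·) ∘ ·) ∘ indTensorEquiv act := funext (cosetCoeffs_galMap act)
  refine Function.Bijective.of_comp_left ?_ (cosetCoeffs_injective act)
  rw [hfactor]
  exact hbij.comp_left.comp_left.comp (indTensorEquiv act).bijective
end

section
/- Let G = ⟨σ⟩ be cyclic of order p, ρ ∈ R a primitive p-th root of unity with η = ρ-1 a non-zero-divisor, and let f(T), g(T) ∈ R[T] be monic polynomials with f(T)·g(T) = T^p - 1. Then in R[G] ≅ R[T]/(T^p-1), the sequence R[G] --f(σ)--> R[G] --g(σ)--> R[G] is exact: f(σ)·R[G] equals the annihilator of g(σ), and R[G]/f(σ)R[G] ≅ g(σ)R[G]. -/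
theorem stmt17 (p : ℕ) (hp : p.Prime) (R : Type*) [CommRing R]
    (ρ : R) (hρ : IsPrimitiveRoot ρ p) (hη : (ρ - 1) ∈ nonZeroDivisors R)
    (f g : Polynomial R) (hf : f.Monic) (hg : g.Monic)
    (hfg : f * g = Polynomial.X ^ p - 1) :
    (∀ x : Polynomial R ⧸ Ideal.span {Polynomial.X ^ p - (1 : Polynomial R)},
        Ideal.Quotient.mk (Ideal.span {Polynomial.X ^ p - (1 : Polynomial R)}) g * x = 0 ↔
          x ∈ Ideal.span
            {Ideal.Quotient.mk (Ideal.span {Polynomial.X ^ p - (1 : Polynomial R)}) f}) ∧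
    Nonempty
      (((Polynomial R ⧸ Ideal.span {Polynomial.X ^ p - (1 : Polynomial R)}) ⧸
          Ideal.span
            {Ideal.Quotient.mk (Ideal.span {Polynomial.X ^ p - (1 : Polynomial R)}) f})
        ≃ₗ[Polynomial R ⧸ Ideal.span {Polynomial.X ^ p - (1 : Polynomial R)}]
        (Ideal.span
          {Ideal.Quotient.mk (Ideal.span {Polynomial.X ^ p - (1 : Polynomial R)}) g} :
          Ideal (Polynomial R ⧸ Ideal.span {Polynomial.X ^ p - (1 : Polynomial R)}))) := by
  set I : Ideal (Polynomial R) := Ideal.span {Polynomial.X ^ p - (1 : Polynomial R)} with hI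
  set mk := Ideal.Quotient.mk I with hmk
  have key : ∀ x : Polynomial R ⧸ I, mk g * x = 0 ↔ x ∈ Ideal.span {mk f} := by
    intro x
    obtain ⟨a, rfl⟩ := Ideal.Quotient.mk_surjective x
    constructor
    · intro h
      rw [← map_mul, Ideal.Quotient.eq_zero_iff_mem, hI, Ideal.mem_span_singleton] at h
      obtain ⟨q, hq⟩ := h
      rw [← hfg] at hq
      have hcancel : a = f * q := by
        have := hg.isRegular.left
        apply this
        show g * a = g * (f * q)
        rw [hq]; ring
      rw [Ideal.mem_span_singleton, hcancel]
      exact ⟨q, by rw [map_mul]⟩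
    · intro h
      rw [Ideal.mem_span_singleton] at h
      obtain ⟨c, hc⟩ := h
      rw [hc, ← mul_assoc, ← map_mul, mul_comm g f, hfg]
      have : mk (Polynomial.X ^ p - 1) = 0 := by
        rw [Ideal.Quotient.eq_zero_iff_mem, hI]
        exact Ideal.subset_span rfl
      rw [this, zero_mul]
  refine ⟨key, ?_⟩
  set Q := Polynomial R ⧸ I
  let φ : Q →ₗ[Q] Q := LinearMap.toSpanSingleton Q Q (mk g)
  have hker : LinearMap.ker φ = Ideal.span {mk f} := by
    ext x
    rw [LinearMap.mem_ker]
    show x • mk g = 0 ↔ _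
    rw [smul_eq_mul, mul_comm]
    exact key x
  have hrange : LinearMap.range φ = Ideal.span {mk g} := by
    rw [← LinearMap.span_singleton_eq_range]
  exact ⟨(Submodule.quotEquivOfEq _ _ hker.symm).trans
    ((φ.quotKerEquivRange).trans (LinearEquiv.ofEq _ _ hrange))⟩
end
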